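/- Let p(·) be a measurable exponent with 0 < p₋ ≤ p₊ < ∞ on a probability space, 0 < q < ∞, and b a slowly varying function. Then every f ∈ L_{p(·),q,b} has absolutely continuous quasi-norm: for every sequence of measurable sets (A_n) with P(A_n) → 0, one has ‖f χ_{A_n}‖_{p(·),q,b} → 0. -/

import Mathlib

/-!
Write the integrand of `‖g‖_{p(·),q,b}^q` as `t^{q-1} (s γ_b(s))^q` with
`s = ‖χ_{|g| > t}‖_{p(·)} ∈ [0, 1]`. Slow variation of `b` (with `ε = 1/2`) makes `√s γ_b(s)`
almost increasing on `(0, 1]`, so the monotone envelope `sup_{0 < s' ≤ s} s' γ_b(s')` is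
comparable to `s γ_b(s)` and is `O(√s)`. Replacing `s γ_b(s)` by this envelope gives integrands
that are measurable in `t` even though `b` is not assumed measurable, are dominated by a multiple
of the integrand of `f`, and tend to `0` pointwise, because for `g = f χ_{A_n}` we have
`s ≤ ‖χ_{A_n}‖_{p(·)} → 0` when `P(A_n) → 0`. Dominated convergence concludes.
-/

open MeasureTheory Set ENNReal Filter Topology

noncomputable section

/-- A measurable function `b : [1,∞) → (0,∞)` is slowly varying if for every `ε > 0`,
`t ^ ε * b t` is equivalent (up to multiplicative constants) to a nondecreasing function
and `t ^ (-ε) * b t` is equivalent to a nonincreasing function on `[1,∞)`. -/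
def SlowlyVarying (b : ℝ → ℝ) : Prop :=
  (∀ t : ℝ, 1 ≤ t → 0 < b t) ∧
  ∀ ε : ℝ, 0 < ε →
    ((∃ g : ℝ → ℝ, MonotoneOn g (Set.Ici 1) ∧ ∃ c > (0:ℝ), ∃ C > (0:ℝ),
        ∀ t : ℝ, 1 ≤ t → c * g t ≤ t ^ ε * b t ∧ t ^ ε * b t ≤ C * g t) ∧
     (∃ g : ℝ → ℝ, AntitoneOn g (Set.Ici 1) ∧ ∃ c > (0:ℝ), ∃ C > (0:ℝ),
        ∀ t : ℝ, 1 ≤ t → c * g t ≤ t ^ (-ε) * b t ∧ t ^ (-ε) * b t ≤ C * g t))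

/-- `γ_b(t) = b (max {t, t⁻¹})` for `t > 0`. -/
def gammaB (b : ℝ → ℝ) (t : ℝ) : ℝ := b (max t t⁻¹)

variable {Ω : Type*} [MeasurableSpace Ω]

/-- The variable Lebesgue quasi-norm
`‖f‖_{p(·)} = inf {λ > 0 : ∫ (|f|/λ)^{p(·)} dμ ≤ 1}`. -/
def vLpNorm (μ : Measure Ω) (p : Ω → ℝ) (f : Ω → ℝ) : ℝ :=
  sInf {lam : ℝ | 0 < lam ∧ ∫⁻ ω, ENNReal.ofReal ((|f ω| / lam) ^ p ω) ∂μ ≤ 1}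

/-- `f ∈ L_{p(·)}` : the modular is finite for some `λ > 0`. -/
def MemVLp (μ : Measure Ω) (p : Ω → ℝ) (f : Ω → ℝ) : Prop :=
  ∃ lam > (0:ℝ), ∫⁻ ω, ENNReal.ofReal ((|f ω| / lam) ^ p ω) ∂μ ≤ 1

/-- `‖χ_A‖_{p(·)}`. -/
def chiNorm (μ : Measure Ω) (p : Ω → ℝ) (A : Set Ω) : ℝ :=
  vLpNorm μ p (A.indicator 1)

/-- The variable Lorentz–Karamata quasi-norm `‖f‖_{p(·),q,b}` (with `q ∈ (0,∞]`). -/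
def vLKNorm (μ : Measure Ω) (p : Ω → ℝ) (q : ℝ≥0∞) (b : ℝ → ℝ) (f : Ω → ℝ) : ℝ≥0∞ :=
  if q = ∞ then
    ⨆ t ∈ Set.Ioi (0:ℝ), ENNReal.ofReal
      (t * chiNorm μ p {ω | t < |f ω|} * gammaB b (chiNorm μ p {ω | t < |f ω|}))
  else
    (∫⁻ t in Set.Ioi (0:ℝ), ENNReal.ofReal
      ((t * chiNorm μ p {ω | t < |f ω|} * gammaB b (chiNorm μ p {ω | t < |f ω|})) ^ q.toReal / t))
      ^ (1 / q.toReal)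

lemma chiNorm_nonneg (μ : Measure Ω) (p : Ω → ℝ) (S : Set Ω) : 0 ≤ chiNorm μ p S :=
  Real.sInf_nonneg fun _ hlam => hlam.1.le

section Probability

variable {μ : Measure Ω} [IsProbabilityMeasure μ] {p : Ω → ℝ}

lemma lintegral_indicator_one_rpow_le_one (S : Set Ω) :
    ∫⁻ ω, ENNReal.ofReal ((|S.indicator (1 : Ω → ℝ) ω| / 1) ^ p ω) ∂μ ≤ 1 := by
  calc ∫⁻ ω, ENNReal.ofReal ((|S.indicator (1 : Ω → ℝ) ω| / 1) ^ p ω) ∂μ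
      ≤ ∫⁻ _, 1 ∂μ := by
        refine lintegral_mono fun ω => ENNReal.ofReal_le_one.2 ?_
        by_cases h : ω ∈ S
        · simp [h]
        · simpa [h] using Real.zero_rpow_le_one (p ω)
    _ = 1 := by simp

lemma chiNorm_le_one (S : Set Ω) : chiNorm μ p S ≤ 1 :=
  csInf_le ⟨0, fun _ hlam => hlam.1.le⟩ ⟨one_pos, lintegral_indicator_one_rpow_le_one S⟩

lemma chiNorm_mono (hp : ∀ᵐ ω ∂μ, 0 ≤ p ω) {S T : Set Ω} (hST : S ⊆ T) :
    chiNorm μ p S ≤ chiNorm μ p T := by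
  refine csInf_le_csInf ⟨0, fun _ hlam => hlam.1.le⟩
    ⟨1, one_pos, lintegral_indicator_one_rpow_le_one T⟩ ?_
  rintro lam ⟨hlam, hmod⟩
  refine ⟨hlam, le_trans (lintegral_mono_ae ?_) hmod⟩
  filter_upwards [hp] with ω hω
  have habs : |S.indicator (1 : Ω → ℝ) ω| ≤ |T.indicator (1 : Ω → ℝ) ω| := by
    by_cases h : ω ∈ S
    · simp [h, hST h]
    · simp [h]
  gcongr

end Probability

section

variable {μ : Measure Ω} {p : Ω → ℝ}

lemma chiNorm_le_of_measure_le {pu : ℝ} (hp : ∀ᵐ ω ∂μ, 0 < p ω ∧ p ω ≤ pu) {S : Set Ω}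
    {lam : ℝ} (hlam : 0 < lam) (hlam1 : lam ≤ 1) (hS : μ S ≤ ENNReal.ofReal (lam ^ pu)) :
    chiNorm μ p S ≤ lam := by
  refine csInf_le ⟨0, fun _ hx => hx.1.le⟩ ⟨hlam, ?_⟩
  have hle : ∀ᵐ ω ∂μ, ENNReal.ofReal ((|S.indicator (1 : Ω → ℝ) ω| / lam) ^ p ω)
      ≤ S.indicator (fun _ => ENNReal.ofReal (lam ^ (-pu))) ω := by
    filter_upwards [hp] with ω ⟨hp0, hpu⟩
    by_cases h : ω ∈ S
    · simp only [h, Set.indicator_of_mem, Pi.one_apply, abs_one]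
      rw [one_div, Real.inv_rpow hlam.le, ← Real.rpow_neg hlam.le]
      exact ENNReal.ofReal_le_ofReal
        (Real.rpow_le_rpow_of_exponent_ge hlam hlam1 (neg_le_neg hpu))
    · simp [h, Real.zero_rpow hp0.ne']
  calc ∫⁻ ω, ENNReal.ofReal ((|S.indicator (1 : Ω → ℝ) ω| / lam) ^ p ω) ∂μ
      ≤ ENNReal.ofReal (lam ^ (-pu)) * μ S :=
        (lintegral_mono_ae hle).trans (lintegral_indicator_const_le S _)
    _ ≤ ENNReal.ofReal (lam ^ (-pu)) * ENNReal.ofReal (lam ^ pu) := by gcongr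
    _ = 1 := by
        rw [← ENNReal.ofReal_mul (by positivity), ← Real.rpow_add hlam, neg_add_cancel,
          Real.rpow_zero, ENNReal.ofReal_one]

lemma tendsto_chiNorm_zero {pu : ℝ} (hp : ∀ᵐ ω ∂μ, 0 < p ω ∧ p ω ≤ pu) {ι : Type*}
    {l : Filter ι} {A : ι → Set Ω} (hA : Tendsto (fun i => μ (A i)) l (𝓝 0)) :
    Tendsto (fun i => chiNorm μ p (A i)) l (𝓝 0) := by
  refine tendsto_order.2 ⟨fun a ha => Eventually.of_forall fun i =>
    ha.trans_le (chiNorm_nonneg μ p _), fun ε hε => ?_⟩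
  set lam := min (ε / 2) 1
  have hlam : 0 < lam := lt_min (half_pos hε) one_pos
  filter_upwards [(tendsto_order.1 hA).2 _ (ENNReal.ofReal_pos.2 (Real.rpow_pos_of_pos hlam pu))]
    with i hi
  calc chiNorm μ p (A i) ≤ lam := chiNorm_le_of_measure_le hp hlam (min_le_right _ _) hi.le
    _ < ε := (min_le_left _ _).trans_lt (half_lt_self hε)

end

def levelChiNorm (μ : Measure Ω) (p : Ω → ℝ) (g : Ω → ℝ) (t : ℝ) : ℝ :=
  chiNorm μ p {ω | t < |g ω|}

lemma levelChiNorm_nonneg (μ : Measure Ω) (p : Ω → ℝ) (g : Ω → ℝ) (t : ℝ) :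
    0 ≤ levelChiNorm μ p g t :=
  chiNorm_nonneg μ p _

lemma levelChiNorm_le_one {μ : Measure Ω} [IsProbabilityMeasure μ] {p : Ω → ℝ} (g : Ω → ℝ)
    (t : ℝ) : levelChiNorm μ p g t ≤ 1 :=
  chiNorm_le_one _

section Level

variable {μ : Measure Ω} [IsProbabilityMeasure μ] {p : Ω → ℝ} (hp : ∀ᵐ ω ∂μ, 0 ≤ p ω)
include hp

lemma antitone_levelChiNorm (g : Ω → ℝ) : Antitone (levelChiNorm μ p g) :=
  fun _ _ hst => chiNorm_mono hp fun _ hω => lt_of_le_of_lt hst hω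

lemma levelChiNorm_indicator_le (S : Set Ω) (g : Ω → ℝ) (t : ℝ) :
    levelChiNorm μ p (S.indicator g) t ≤ levelChiNorm μ p g t := by
  refine chiNorm_mono hp fun ω (hω : t < |S.indicator g ω|) => ?_
  by_cases h : ω ∈ S
  · simpa [h] using hω
  · simp only [h, not_false_eq_true, Set.indicator_of_notMem, abs_zero] at hω
    exact hω.trans_le (abs_nonneg _)

lemma levelChiNorm_indicator_le_chiNorm (S : Set Ω) (g : Ω → ℝ) {t : ℝ} (ht : 0 ≤ t) :
    levelChiNorm μ p (S.indicator g) t ≤ chiNorm μ p S := by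
  refine chiNorm_mono hp fun ω (hω : t < |S.indicator g ω|) => ?_
  by_contra h
  simp [h] at hω
  linarith

end Level

section SlowlyVarying

variable {b : ℝ → ℝ} (hb : SlowlyVarying b)
include hb

lemma gammaB_pos {x : ℝ} (hx : 0 < x) : 0 < gammaB b x := by
  refine hb.1 _ ?_
  rcases le_or_gt 1 x with h | h
  · exact le_max_of_le_left h
  · exact le_max_of_le_right ((one_le_inv₀ hx).2 h.le)

lemma mul_gammaB_nonneg {x : ℝ} (hx : 0 ≤ x) : 0 ≤ x * gammaB b x := by
  rcases hx.eq_or_lt with rfl | hx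
  · simp
  · exact (mul_pos hx (gammaB_pos hb hx)).le

lemma SlowlyVarying.exists_sqrt_mul_gammaB_le : ∃ K : ℝ, 0 < K ∧
    ∀ s r : ℝ, 0 < s → s ≤ r → r ≤ 1 → √s * gammaB b s ≤ K * (√r * gammaB b r) := by
  obtain ⟨-, g, hg, c, hc, C, hC, hgb⟩ := hb.2 (1 / 2) one_half_pos
  refine ⟨C / c, div_pos hC hc, fun s r hs hsr hr1 => ?_⟩
  have hr : 0 < r := hs.trans_le hsr
  have hrw : ∀ x : ℝ, 0 < x → x ≤ 1 →
      √x * gammaB b x = x⁻¹ ^ (-(1 / 2) : ℝ) * b x⁻¹ := by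
    intro x hx hx1
    rw [gammaB, max_eq_right (hx1.trans ((one_le_inv₀ hx).2 hx1)), Real.sqrt_eq_rpow,
      Real.rpow_neg (inv_nonneg.2 hx.le), Real.inv_rpow hx.le, inv_inv]
  have hs1 : 1 ≤ s⁻¹ := (one_le_inv₀ hs).2 (hsr.trans hr1)
  have hr1' : 1 ≤ r⁻¹ := (one_le_inv₀ hr).2 hr1
  rw [hrw s hs (hsr.trans hr1), hrw r hr hr1]
  calc s⁻¹ ^ (-(1 / 2) : ℝ) * b s⁻¹ ≤ C * g s⁻¹ := (hgb _ hs1).2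
    _ ≤ C * g r⁻¹ := by gcongr; exact hg hr1' hs1 (inv_anti₀ hs hsr)
    _ = C / c * (c * g r⁻¹) := by field_simp
    _ ≤ C / c * (r⁻¹ ^ (-(1 / 2) : ℝ) * b r⁻¹) :=
        mul_le_mul_of_nonneg_left (hgb _ hr1').1 (div_pos hC hc).le

end SlowlyVarying

def gammaEnvelope (b : ℝ → ℝ) (r : ℝ) : ℝ≥0∞ :=
  ⨆ s ∈ Ioc 0 r, ENNReal.ofReal (s * gammaB b s)

lemma monotone_gammaEnvelope (b : ℝ → ℝ) : Monotone (gammaEnvelope b) :=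
  fun _ _ hrr' => biSup_mono fun _ hs => ⟨hs.1, hs.2.trans hrr'⟩

lemma ofReal_mul_gammaB_le_gammaEnvelope (b : ℝ → ℝ) {r : ℝ} (hr : 0 ≤ r) :
    ENNReal.ofReal (r * gammaB b r) ≤ gammaEnvelope b r := by
  rcases hr.eq_or_lt with rfl | hr
  · simp
  · exact le_iSup₂ (f := fun s (_ : s ∈ Ioc 0 r) => ENNReal.ofReal (s * gammaB b s)) r
      ⟨hr, le_rfl⟩

lemma SlowlyVarying.exists_gammaEnvelope_le {b : ℝ → ℝ} (hb : SlowlyVarying b) :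
    ∃ K : ℝ, 0 < K ∧ ∀ r : ℝ, 0 ≤ r → r ≤ 1 →
      gammaEnvelope b r ≤ ENNReal.ofReal K * ENNReal.ofReal (r * gammaB b r) ∧
      gammaEnvelope b r ≤ ENNReal.ofReal (K * gammaB b 1 * √r) := by
  obtain ⟨K, hK, hsqrt⟩ := hb.exists_sqrt_mul_gammaB_le
  have key : ∀ s r : ℝ, 0 < s → s ≤ r → r ≤ 1 →
      s * gammaB b s ≤ K * √s * (√r * gammaB b r) := by
    intro s r hs hsr hr1
    calc s * gammaB b s = √s * (√s * gammaB b s) := by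
          rw [← mul_assoc, Real.mul_self_sqrt hs.le]
      _ ≤ √s * (K * (√r * gammaB b r)) :=
          mul_le_mul_of_nonneg_left (hsqrt s r hs hsr hr1) (Real.sqrt_nonneg s)
      _ = K * √s * (√r * gammaB b r) := by ring
  refine ⟨K, hK, fun r hr0 hr1 => ⟨iSup₂_le fun s hs => ?_, iSup₂_le fun s hs => ?_⟩⟩
  · have hγr := (gammaB_pos hb (hs.1.trans_le hs.2)).le
    rw [← ENNReal.ofReal_mul hK.le]
    refine ENNReal.ofReal_le_ofReal ((key s r hs.1 hs.2 hr1).trans ?_)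
    calc K * √s * (√r * gammaB b r) ≤ K * √r * (√r * gammaB b r) := by gcongr; exact hs.2
      _ = K * (r * gammaB b r) := by linear_combination K * gammaB b r * Real.mul_self_sqrt hr0
  · refine ENNReal.ofReal_le_ofReal ((key s 1 hs.1 (hs.2.trans hr1) le_rfl).trans ?_)
    rw [Real.sqrt_one, one_mul, mul_right_comm]
    have := gammaB_pos hb one_pos
    gcongr
    exact hs.2

def lkIntegrand (μ : Measure Ω) (p : Ω → ℝ) (q : ℝ) (b : ℝ → ℝ) (g : Ω → ℝ) (t : ℝ) : ℝ≥0∞ :=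
  ENNReal.ofReal (t ^ q / t) *
    ENNReal.ofReal (levelChiNorm μ p g t * gammaB b (levelChiNorm μ p g t)) ^ q

def lkMajorant (μ : Measure Ω) (p : Ω → ℝ) (q : ℝ) (b : ℝ → ℝ) (g : Ω → ℝ) (t : ℝ) : ℝ≥0∞ :=
  ENNReal.ofReal (t ^ q / t) * gammaEnvelope b (levelChiNorm μ p g t) ^ q

lemma vLKNorm_ofReal_eq {b : ℝ → ℝ} (hb : SlowlyVarying b) (μ : Measure Ω) (p : Ω → ℝ)
    {q : ℝ} (hq : 0 ≤ q) (g : Ω → ℝ) :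
    vLKNorm μ p (ENNReal.ofReal q) b g = (∫⁻ t in Ioi 0, lkIntegrand μ p q b g t) ^ (1 / q) := by
  rw [vLKNorm, if_neg ofReal_ne_top, toReal_ofReal hq]
  congr 1
  refine setLIntegral_congr_fun measurableSet_Ioi fun t (ht : 0 < t) => ?_
  have hx := mul_gammaB_nonneg hb (chiNorm_nonneg μ p {ω | t < |g ω|})
  rw [lkIntegrand, levelChiNorm, ENNReal.ofReal_rpow_of_nonneg hx hq,
    ← ENNReal.ofReal_mul (by positivity), mul_assoc t, Real.mul_rpow ht.le hx, mul_div_right_comm]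

section Majorant

variable {μ : Measure Ω} {p : Ω → ℝ} {q : ℝ} {b : ℝ → ℝ}

lemma lkIntegrand_le_lkMajorant (hq : 0 ≤ q) (g : Ω → ℝ) (t : ℝ) :
    lkIntegrand μ p q b g t ≤ lkMajorant μ p q b g t := by
  have := ofReal_mul_gammaB_le_gammaEnvelope b (levelChiNorm_nonneg μ p g t)
  unfold lkIntegrand lkMajorant
  gcongr

lemma SlowlyVarying.exists_lkMajorant_le [IsProbabilityMeasure μ] (hb : SlowlyVarying b)
    (hq : 0 ≤ q) : ∃ C : ℝ≥0∞, C ≠ ∞ ∧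
      ∀ g t, lkMajorant μ p q b g t ≤ C * lkIntegrand μ p q b g t := by
  obtain ⟨K, hK, hKle⟩ := hb.exists_gammaEnvelope_le
  refine ⟨ENNReal.ofReal K ^ q, rpow_ne_top_of_nonneg hq ofReal_ne_top, fun g t => ?_⟩
  have := (hKle _ (levelChiNorm_nonneg μ p g t) (levelChiNorm_le_one g t)).1
  calc lkMajorant μ p q b g t ≤ ENNReal.ofReal (t ^ q / t) * (ENNReal.ofReal K *
        ENNReal.ofReal (levelChiNorm μ p g t * gammaB b (levelChiNorm μ p g t))) ^ q := by
        unfold lkMajorant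
        gcongr
    _ = _ := by rw [lkIntegrand, ENNReal.mul_rpow_of_nonneg _ _ hq]; ring

variable [IsProbabilityMeasure μ] (hp : ∀ᵐ ω ∂μ, 0 ≤ p ω)
include hp

lemma measurable_lkMajorant (g : Ω → ℝ) : Measurable (lkMajorant μ p q b g) :=
  (by fun_prop : Measurable fun t : ℝ => ENNReal.ofReal (t ^ q / t)).mul
    (((monotone_gammaEnvelope b).comp_antitone (antitone_levelChiNorm hp g)).measurable.pow_const q)

lemma lkMajorant_indicator_le (hq : 0 ≤ q) (S : Set Ω) (g : Ω → ℝ) (t : ℝ) :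
    lkMajorant μ p q b (S.indicator g) t ≤ lkMajorant μ p q b g t := by
  have := monotone_gammaEnvelope b (levelChiNorm_indicator_le hp S g t)
  unfold lkMajorant
  gcongr

lemma lkMajorant_indicator_le_chiNorm (hq : 0 ≤ q) (S : Set Ω) (g : Ω → ℝ) {t : ℝ} (ht : 0 ≤ t) :
    lkMajorant μ p q b (S.indicator g) t ≤
      ENNReal.ofReal (t ^ q / t) * gammaEnvelope b (chiNorm μ p S) ^ q := by
  have := monotone_gammaEnvelope b (levelChiNorm_indicator_le_chiNorm hp S g ht)
  unfold lkMajorant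
  gcongr

end Majorant

section Convergence

variable {μ : Measure Ω} [IsProbabilityMeasure μ] {p : Ω → ℝ} {pu : ℝ}
  (hp : ∀ᵐ ω ∂μ, 0 < p ω ∧ p ω ≤ pu) {b : ℝ → ℝ} (hb : SlowlyVarying b)
include hp hb

lemma tendsto_gammaEnvelope_chiNorm {ι : Type*} {l : Filter ι} {A : ι → Set Ω}
    (hA : Tendsto (fun i => μ (A i)) l (𝓝 0)) :
    Tendsto (fun i => gammaEnvelope b (chiNorm μ p (A i))) l (𝓝 0) := by
  obtain ⟨K, -, hK⟩ := hb.exists_gammaEnvelope_le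
  have hsqrt : Tendsto (fun i => ENNReal.ofReal (K * gammaB b 1 * √(chiNorm μ p (A i)))) l
      (𝓝 0) := by
    simpa using ENNReal.tendsto_ofReal (((tendsto_chiNorm_zero hp hA).sqrt).const_mul _)
  exact tendsto_of_tendsto_of_tendsto_of_le_of_le tendsto_const_nhds hsqrt (fun _ => zero_le)
    fun i => (hK _ (chiNorm_nonneg μ p _) (chiNorm_le_one _)).2

lemma tendsto_lkMajorant_indicator {q : ℝ} (hq : 0 < q) {ι : Type*} {l : Filter ι}
    {A : ι → Set Ω} (hA : Tendsto (fun i => μ (A i)) l (𝓝 0)) (g : Ω → ℝ) {t : ℝ}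
    (ht : 0 ≤ t) : Tendsto (fun i => lkMajorant μ p q b ((A i).indicator g) t) l (𝓝 0) := by
  have hbound : Tendsto (fun i => ENNReal.ofReal (t ^ q / t) *
      gammaEnvelope b (chiNorm μ p (A i)) ^ q) l (𝓝 0) := by
    simpa [ENNReal.zero_rpow_of_pos hq] using ENNReal.Tendsto.const_mul
      ((tendsto_gammaEnvelope_chiNorm hp hb hA).ennrpow_const q) (Or.inr ofReal_ne_top)
  exact tendsto_of_tendsto_of_tendsto_of_le_of_le tendsto_const_nhds hbound (fun _ => zero_le)
    fun i => lkMajorant_indicator_le_chiNorm (hp.mono fun _ h => h.1.le) hq.le _ g ht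

lemma tendsto_lintegral_lkIntegrand_indicator {q : ℝ} (hq : 0 < q) {f : Ω → ℝ}
    (hf : ∫⁻ t in Ioi 0, lkIntegrand μ p q b f t ≠ ∞) {A : ℕ → Set Ω}
    (hA : Tendsto (fun n => μ (A n)) atTop (𝓝 0)) :
    Tendsto (fun n => ∫⁻ t in Ioi 0, lkIntegrand μ p q b ((A n).indicator f) t) atTop (𝓝 0) := by
  have hp0 : ∀ᵐ ω ∂μ, 0 ≤ p ω := hp.mono fun _ h => h.1.le
  obtain ⟨C, hC, hle⟩ := hb.exists_lkMajorant_le (μ := μ) (p := p) hq.le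
  have hfin : ∫⁻ t in Ioi 0, lkMajorant μ p q b f t ≠ ∞ :=
    ne_top_of_le_ne_top (mul_ne_top hC hf)
      ((lintegral_mono (hle f)).trans_eq (lintegral_const_mul' _ _ hC))
  have hmaj : Tendsto (fun n => ∫⁻ t in Ioi 0, lkMajorant μ p q b ((A n).indicator f) t) atTop
      (𝓝 0) := by
    simpa using tendsto_lintegral_of_dominated_convergence _
      (fun n => measurable_lkMajorant hp0 _)
      (fun n => ae_of_all _ (lkMajorant_indicator_le hp0 hq.le (A n) f)) hfin
      (ae_restrict_of_forall_mem measurableSet_Ioi fun t ht =>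
        tendsto_lkMajorant_indicator hp hb hq hA f (le_of_lt ht))
  exact tendsto_of_tendsto_of_tendsto_of_le_of_le tendsto_const_nhds hmaj (fun _ => zero_le)
    fun n => lintegral_mono (lkIntegrand_le_lkMajorant hq.le _)

end Convergence

theorem vLKNorm_abs_continuous_general (μ : Measure Ω) [IsProbabilityMeasure μ]
    (p : Ω → ℝ) (pl pu : ℝ) (hpl : 0 < pl)
    (hp : ∀ᵐ ω ∂μ, pl ≤ p ω ∧ p ω ≤ pu)
    (q : ℝ) (hq : 0 < q) (b : ℝ → ℝ) (hb : SlowlyVarying b)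
    (f : Ω → ℝ)
    (hfL : vLKNorm μ p (ENNReal.ofReal q) b f < ∞)
    (A : ℕ → Set Ω)
    (hA0 : Filter.Tendsto (fun n => μ (A n)) Filter.atTop (nhds 0)) :
    Filter.Tendsto (fun n => vLKNorm μ p (ENNReal.ofReal q) b ((A n).indicator f))
      Filter.atTop (nhds 0) := by
  have hp' : ∀ᵐ ω ∂μ, 0 < p ω ∧ p ω ≤ pu := hp.mono fun _ h => ⟨hpl.trans_le h.1, h.2⟩
  have hq' : 0 < 1 / q := one_div_pos.2 hq
  simp only [vLKNorm_ofReal_eq hb μ p hq.le] at hfL ⊢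
  have hf := (rpow_eq_top_iff_of_pos hq').not.1 hfL.ne
  have h := (tendsto_lintegral_lkIntegrand_indicator hp' hb hq hf hA0).ennrpow_const (1 / q)
  rwa [ENNReal.zero_rpow_of_pos hq'] at h

/-- Absolute continuity of the quasi-norm: for `0 < q < ∞` and `f ∈ L_{p(·),q,b}`,
if `P(A_n) → 0` then `‖f χ_{A_n}‖_{p(·),q,b} → 0`. -/
theorem vLKNorm_abs_continuous (μ : Measure Ω) [IsProbabilityMeasure μ]
    (p : Ω → ℝ) (pl pu : ℝ) (hpl : 0 < pl) (hple : pl ≤ pu)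
    (hp : ∀ᵐ ω ∂μ, pl ≤ p ω ∧ p ω ≤ pu)
    (q : ℝ) (hq : 0 < q) (b : ℝ → ℝ) (hb : SlowlyVarying b)
    (f : Ω → ℝ) (hfm : Measurable f)
    (hfL : vLKNorm μ p (ENNReal.ofReal q) b f < ∞)
    (A : ℕ → Set Ω) (hA : ∀ n, MeasurableSet (A n))
    (hA0 : Filter.Tendsto (fun n => μ (A n)) Filter.atTop (nhds 0)) :
    Filter.Tendsto (fun n => vLKNorm μ p (ENNReal.ofReal q) b ((A n).indicator f))
      Filter.atTop (nhds 0) :=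
  vLKNorm_abs_continuous_general μ p pl pu hpl hp q hq b hb f hfL A hA0
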